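/- If (π̄₁, π̄₂) is a Nash equilibrium of the regularized game with utilities 𝒰₁(π₁,π₂) = u(π₁,π₂) - λ₁·KL(π₁‖τ₁) and 𝒰₂(π₁,π₂) = -u(π₁,π₂) - λ₂·KL(π₂‖τ₂), then the exploitability of π̄₁ in the original zero-sum game is at most λ₁β₁: max_{π₁*∈Δ(A₁)} u(π₁*, π̄₂) - u(π̄₁, π̄₂) ≤ λ₁·β₁, where β₁ = max_a log(1/τ₁(a)). -/

import Mathlib

/-! The regularised best-response condition gives
`u(p, q̄) - u(p̄, q̄) ≤ λ₁ (KL(p‖τ₁) - KL(p̄‖τ₁))`. Gibbs' inequality drops the second divergence,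
and for a probability vector `p` each term `p a log (p a / τ₁ a)` is at most `p a log (1 / τ₁ a)`
because `p a ≤ 1`, so `KL(p‖τ₁) ≤ β₁`. -/

open Real Finset

theorem sub_le_mul_log_div {p τ : ℝ} (hp : 0 ≤ p) (hτ : 0 < τ) :
    p - τ ≤ p * log (p / τ) := by
  have h := mul_le_mul_of_nonneg_left (self_sub_one_le_mul_log (div_nonneg hp hτ.le)) hτ.le
  calc p - τ = τ * (p / τ - 1) := by field_simp
    _ ≤ τ * (p / τ * log (p / τ)) := h
    _ = p * log (p / τ) := by field_simp

theorem mul_log_div_le_mul_log_one_div {p τ : ℝ} (hp₀ : 0 ≤ p) (hp₁ : p ≤ 1) (hτ : 0 < τ) :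
    p * log (p / τ) ≤ p * log (1 / τ) := by
  rcases hp₀.eq_or_lt with rfl | hp
  · simp
  · exact mul_le_mul_of_nonneg_left
      (log_le_log (div_pos hp hτ) (div_le_div_of_nonneg_right hp₁ hτ.le)) hp.le

section FiniteKL

variable {A : Type*} [Fintype A] {p τ : A → ℝ}

theorem sum_mul_log_div_nonneg (hp : ∀ a, 0 ≤ p a) (hτ : ∀ a, 0 < τ a)
    (hsum : ∑ a, p a = ∑ a, τ a) :
    0 ≤ ∑ a, p a * log (p a / τ a) :=
  calc (0 : ℝ) = ∑ a, (p a - τ a) := by rw [sum_sub_distrib, hsum, sub_self]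
    _ ≤ ∑ a, p a * log (p a / τ a) :=
      sum_le_sum fun a _ => sub_le_mul_log_div (hp a) (hτ a)

theorem sum_mul_log_div_le_sup'_log_one_div [Nonempty A] (hp : ∀ a, 0 ≤ p a)
    (hp₁ : ∑ a, p a = 1) (hτ : ∀ a, 0 < τ a) :
    ∑ a, p a * log (p a / τ a) ≤ univ.sup' univ_nonempty (fun a => log (1 / τ a)) := by
  set β := univ.sup' univ_nonempty (fun a => log (1 / τ a))
  have hp_le_one (a : A) : p a ≤ 1 :=
    hp₁ ▸ single_le_sum (fun a _ => hp a) (mem_univ a)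
  calc ∑ a, p a * log (p a / τ a) ≤ ∑ a, p a * β := sum_le_sum fun a _ =>
        (mul_log_div_le_mul_log_one_div (hp a) (hp_le_one a) (hτ a)).trans
          (mul_le_mul_of_nonneg_left (le_sup' (fun a => log (1 / τ a)) (mem_univ a)) (hp a))
    _ = β := by rw [← sum_mul, hp₁, one_mul]

end FiniteKL

theorem stmt8_general {A₁ A₂ : Type*} [Fintype A₁] [Fintype A₂] [Nonempty A₁]
    (G : A₁ → A₂ → ℝ)
    (τ₁ : A₁ → ℝ)
    (hτ₁0 : ∀ a, 0 < τ₁ a)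
    (hτ₁1 : ∑ a, τ₁ a = 1)
    (lam₁ : ℝ) (hl₁ : 0 ≤ lam₁)
    (β₁ : ℝ)
    (hβ₁ : β₁ = Finset.univ.sup' Finset.univ_nonempty (fun a => Real.log (1 / τ₁ a)))
    (pbar : A₁ → ℝ) (qbar : A₂ → ℝ)
    (hp0 : ∀ a, 0 ≤ pbar a) (hp1 : ∑ a, pbar a = 1)
    (hNash₁ : ∀ p : A₁ → ℝ, (∀ a, 0 ≤ p a) → ∑ a, p a = 1 →
      (∑ a, ∑ b, p a * qbar b * G a b) - lam₁ * ∑ a, p a * Real.log (p a / τ₁ a)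
        ≤ (∑ a, ∑ b, pbar a * qbar b * G a b)
            - lam₁ * ∑ a, pbar a * Real.log (pbar a / τ₁ a)) :
    ∀ p : A₁ → ℝ, (∀ a, 0 ≤ p a) → ∑ a, p a = 1 →
      (∑ a, ∑ b, p a * qbar b * G a b) - (∑ a, ∑ b, pbar a * qbar b * G a b)
        ≤ lam₁ * β₁ := by
  intro p hp hp₁
  have hbest := hNash₁ p hp hp₁
  have hKL_p : lam₁ * ∑ a, p a * log (p a / τ₁ a) ≤ lam₁ * β₁ :=
    mul_le_mul_of_nonneg_left (hβ₁ ▸ sum_mul_log_div_le_sup'_log_one_div hp hp₁ hτ₁0) hl₁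
  have hKL_pbar : 0 ≤ lam₁ * ∑ a, pbar a * log (pbar a / τ₁ a) :=
    mul_nonneg hl₁ (sum_mul_log_div_nonneg hp0 hτ₁0 (hp1.trans hτ₁1.symm))
  linarith

theorem stmt8 {A₁ A₂ : Type*} [Fintype A₁] [Fintype A₂] [Nonempty A₁] [Nonempty A₂]
    (G : A₁ → A₂ → ℝ)
    (τ₁ : A₁ → ℝ) (τ₂ : A₂ → ℝ)
    (hτ₁0 : ∀ a, 0 < τ₁ a) (hτ₂0 : ∀ b, 0 < τ₂ b)
    (hτ₁1 : ∑ a, τ₁ a = 1) (hτ₂1 : ∑ b, τ₂ b = 1)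
    (lam₁ lam₂ : ℝ) (hl₁ : 0 ≤ lam₁) (hl₂ : 0 ≤ lam₂)
    (β₁ : ℝ)
    (hβ₁ : β₁ = Finset.univ.sup' Finset.univ_nonempty (fun a => Real.log (1 / τ₁ a)))
    (pbar : A₁ → ℝ) (qbar : A₂ → ℝ)
    (hp0 : ∀ a, 0 ≤ pbar a) (hp1 : ∑ a, pbar a = 1)
    (hq0 : ∀ b, 0 ≤ qbar b) (hq1 : ∑ b, qbar b = 1)
    (hNash₁ : ∀ p : A₁ → ℝ, (∀ a, 0 ≤ p a) → ∑ a, p a = 1 →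
      (∑ a, ∑ b, p a * qbar b * G a b) - lam₁ * ∑ a, p a * Real.log (p a / τ₁ a)
        ≤ (∑ a, ∑ b, pbar a * qbar b * G a b)
            - lam₁ * ∑ a, pbar a * Real.log (pbar a / τ₁ a))
    (hNash₂ : ∀ q : A₂ → ℝ, (∀ b, 0 ≤ q b) → ∑ b, q b = 1 →
      (-(∑ a, ∑ b, pbar a * q b * G a b)) - lam₂ * ∑ b, q b * Real.log (q b / τ₂ b)
        ≤ (-(∑ a, ∑ b, pbar a * qbar b * G a b))
            - lam₂ * ∑ b, qbar b * Real.log (qbar b / τ₂ b)) :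
    ∀ p : A₁ → ℝ, (∀ a, 0 ≤ p a) → ∑ a, p a = 1 →
      (∑ a, ∑ b, p a * qbar b * G a b) - (∑ a, ∑ b, pbar a * qbar b * G a b)
        ≤ lam₁ * β₁ :=
  stmt8_general G τ₁ hτ₁0 hτ₁1 lam₁ hl₁ β₁ hβ₁ pbar qbar hp0 hp1 hNash₁
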